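/- If X is a locally Lindelöf, c-well-filtered P-space, then the poset (LQ(X), ⊇) of saturated Lindelöf subsets ordered by reverse inclusion is a countably approximating poset. -/

import Mathlib

universe u

/-- A set is saturated if it equals the intersection of its open neighbourhoods. -/
def IsSaturatedSet {X : Type u} [TopologicalSpace X] (A : Set X) : Prop :=
  A = ⋂₀ {U : Set X | IsOpen U ∧ A ⊆ U}

/-- A family of sets is countably filtered (under `⊆`) if every countable subfamily
has a lower bound in the family. -/
def CntFilteredFam {X : Type u} (S : Set (Set X)) : Prop :=
  ∀ T ⊆ S, T.Countable → ∃ L ∈ S, ∀ t ∈ T, L ⊆ t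

/-- A family of sets is countably directed (under `⊆`) if every countable subfamily
has an upper bound in the family. -/
def CntDirectedFam {X : Type u} (S : Set (Set X)) : Prop :=
  ∀ T ⊆ S, T.Countable → ∃ U ∈ S, ∀ t ∈ T, t ⊆ U

/-- A space is c-well-filtered if for every countably filtered family of saturated
Lindelöf subsets whose intersection is contained in an open `U`, some member is contained in `U`. -/
def CWellFiltered (X : Type u) [TopologicalSpace X] : Prop :=
  ∀ S : Set (Set X), (∀ K ∈ S, IsSaturatedSet K ∧ IsLindelof K) →
    CntFilteredFam S → ∀ U : Set X, IsOpen U → ⋂₀ S ⊆ U → ∃ K ∈ S, K ⊆ U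

/-- A subset `D` is countably directed w.r.t. `le` if every countable subset of `D`
has an upper bound in `D`. -/
def CntDirected {α : Type u} (le : α → α → Prop) (D : Set α) : Prop :=
  ∀ E ⊆ D, E.Countable → ∃ d ∈ D, ∀ e ∈ E, le e d

/-- `a` is a least upper bound of `D` w.r.t. `le`. -/
def RIsLUB {α : Type u} (le : α → α → Prop) (D : Set α) (a : α) : Prop :=
  (∀ d ∈ D, le d a) ∧ ∀ b, (∀ d ∈ D, le d b) → le a b

/-- Countably directed complete: every countably directed subset has a least upper bound. -/
def CDComplete {α : Type u} (le : α → α → Prop) : Prop :=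
  ∀ D : Set α, CntDirected le D → ∃ a, RIsLUB le D a

/-- `x` is countably way-below `y`. -/
def CWayBelow {α : Type u} (le : α → α → Prop) (x y : α) : Prop :=
  ∀ D : Set α, CntDirected le D → ∀ a, RIsLUB le D a → le y a → ∃ d ∈ D, le x d

/-- `U` is σ-Scott open: an upper set meeting every countably directed set whose sup lies in `U`. -/
def SigmaScottOpenRel {α : Type u} (le : α → α → Prop) (U : Set α) : Prop :=
  (∀ x ∈ U, ∀ y, le x y → y ∈ U) ∧
  ∀ D : Set α, CntDirected le D → ∀ a, RIsLUB le D a → a ∈ U → ∃ d ∈ D, d ∈ U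

/-- `F` is countably filtered w.r.t. `le`: every countable subset has a lower bound in `F`. -/
def CntFilteredRel {α : Type u} (le : α → α → Prop) (F : Set α) : Prop :=
  ∀ E ⊆ F, E.Countable → ∃ l ∈ F, ∀ e ∈ E, le l e

/-- Countably approximating: countably directed complete and each `x` is the sup of
the countably directed set of elements countably way-below `x`. -/
def CntApprox {α : Type u} (le : α → α → Prop) : Prop :=
  CDComplete le ∧
    ∀ x, CntDirected le {y | CWayBelow le y x} ∧ RIsLUB le {y | CWayBelow le y x} x

/-- `B` is a σ-basis: for each `x`, `B ∩ ⇓꜀x` is countably directed with sup `x`. -/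
def IsSigmaBasis {α : Type u} (le : α → α → Prop) (B : Set α) : Prop :=
  ∀ x, CntDirected le (B ∩ {y | CWayBelow le y x}) ∧
    RIsLUB le (B ∩ {y | CWayBelow le y x}) x

/-- A P-space: every countable intersection of open sets is open. -/
def PSpace (X : Type u) [TopologicalSpace X] : Prop :=
  ∀ 𝒰 : Set (Set X), 𝒰.Countable → (∀ U ∈ 𝒰, IsOpen U) → IsOpen (⋂₀ 𝒰)

/-- Locally Lindelöf: every open neighbourhood contains a saturated Lindelöf
neighbourhood. -/
def LocallyLindelofSp (X : Type u) [TopologicalSpace X] : Prop :=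
  ∀ U : Set X, IsOpen U → ∀ x ∈ U, ∃ K : Set X,
    IsSaturatedSet K ∧ IsLindelof K ∧ x ∈ interior K ∧ K ⊆ U

/-- The saturated Lindelöf subsets of `X`. -/
def LQ (X : Type u) [TopologicalSpace X] : Type u :=
  {K : Set X // IsSaturatedSet K ∧ IsLindelof K}

/-- The order of `(LQ(X), ⊇)`: reverse inclusion. -/
def lqLe {X : Type u} [TopologicalSpace X] (A B : LQ X) : Prop := B.1 ⊆ A.1

/-!
Saturated sets are exactly the sets closed downwards under specialization, hence closed under
arbitrary unions and intersections. By c-well-filteredness the intersection of a countably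
directed family in `(LQ(X), ⊇)` is again Lindelöf, so it is the supremum; the same property shows
`Q ≪_c K` whenever `K ⊆ int Q`. Conversely, local Lindelöfness gives a saturated Lindelöf `L` with
`K ⊆ int L ⊆ L ⊆ W` for every open `W ⊇ K`, and in a P-space the interiors of countably many such
neighbourhoods of `K` meet in an open set; so these neighbourhoods form a countably directed set
with supremum `K`, and `Q ≪_c K` forces `K ⊆ int Q`. Thus `⇓_c K` is exactly the set of saturated
Lindelöf neighbourhoods of `K`.
-/

open Set

section

variable {X : Type u} [TopologicalSpace X]

theorem isSaturatedSet_iff_specializes {A : Set X} :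
    IsSaturatedSet A ↔ ∀ ⦃x y : X⦄, x ⤳ y → y ∈ A → x ∈ A := by
  constructor
  · intro hA x y hxy hy
    rw [hA]
    exact fun U hU => hxy.mem_open hU.1 (hU.2 hy)
  · intro hA
    refine subset_antisymm (fun x hx U hU => hU.2 hx) fun x hx => ?_
    by_contra hxA
    have hsep : ∀ a ∈ A, ∃ U : Set X, IsOpen U ∧ a ∈ U ∧ x ∉ U := fun a ha => by
      simpa [specializes_iff_forall_open] using fun hxa : x ⤳ a => hxA (hA hxa ha)
    choose! U hU using hsep
    have hxU : x ∈ ⋃ a ∈ A, U a :=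
      hx _ ⟨isOpen_biUnion fun a ha => (hU a ha).1, fun a ha => mem_biUnion ha (hU a ha).2.1⟩
    obtain ⟨a, ha, hxa⟩ := mem_iUnion₂.1 hxU
    exact (hU a ha).2.2 hxa

theorem IsSaturatedSet.mem_of_forall_isOpen {A : Set X} (hA : IsSaturatedSet A) {x : X}
    (h : ∀ U : Set X, IsOpen U → A ⊆ U → x ∈ U) : x ∈ A := by
  rw [hA]
  exact fun U hU => h U hU.1 hU.2

theorem isSaturatedSet_biUnion {ι : Type*} {s : Set ι} {f : ι → Set X}
    (hf : ∀ i ∈ s, IsSaturatedSet (f i)) : IsSaturatedSet (⋃ i ∈ s, f i) := by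
  rw [isSaturatedSet_iff_specializes]
  intro x y hxy hy
  obtain ⟨i, hi, hyi⟩ := mem_iUnion₂.1 hy
  exact mem_biUnion hi (isSaturatedSet_iff_specializes.1 (hf i hi) hxy hyi)

theorem isSaturatedSet_sInter {S : Set (Set X)} (hS : ∀ A ∈ S, IsSaturatedSet A) :
    IsSaturatedSet (⋂₀ S) := by
  rw [isSaturatedSet_iff_specializes]
  exact fun x y hxy hy A hA => isSaturatedSet_iff_specializes.1 (hS A hA) hxy (hy A hA)

theorem LocallyLindelofSp.exists_saturated_lindelof_between (hLL : LocallyLindelofSp X)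
    {K W : Set X} (hK : IsLindelof K) (hW : IsOpen W) (hKW : K ⊆ W) :
    ∃ L : Set X, IsSaturatedSet L ∧ IsLindelof L ∧ K ⊆ interior L ∧ L ⊆ W := by
  have hloc : ∀ x ∈ K, ∃ L : Set X,
      IsSaturatedSet L ∧ IsLindelof L ∧ x ∈ interior L ∧ L ⊆ W :=
    fun x hx => hLL W hW x (hKW hx)
  choose! L hL using hloc
  obtain ⟨t, htc, htK, hcover⟩ := hK.elim_nhds_subcover (fun x => interior (L x))
    fun x hx => isOpen_interior.mem_nhds (hL x hx).2.2.1
  refine ⟨⋃ x ∈ t, L x, isSaturatedSet_biUnion fun x hx => (hL x (htK x hx)).1,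
    htc.isLindelof_biUnion fun x hx => (hL x (htK x hx)).2.1, ?_,
    iUnion₂_subset fun x hx => (hL x (htK x hx)).2.2.2⟩
  refine hcover.trans (interior_maximal (iUnion₂_mono fun _ _ => interior_subset) ?_)
  exact isOpen_biUnion fun _ _ => isOpen_interior

theorem CWellFiltered.isLindelof_sInter (hW : CWellFiltered X) {S : Set (Set X)}
    (hS : ∀ K ∈ S, IsSaturatedSet K ∧ IsLindelof K) (hSf : CntFilteredFam S) :
    IsLindelof (⋂₀ S) := by
  rw [isLindelof_iff_countable_subcover]
  intro ι U hU hcover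
  obtain ⟨K, hKS, hKU⟩ := hW S hS hSf _ (isOpen_iUnion hU) hcover
  obtain ⟨r, hrc, hKr⟩ := (hS K hKS).2.elim_countable_subcover U hU hKU
  exact ⟨r, hrc, (sInter_subset_of_mem hKS).trans hKr⟩

theorem LQ.isSaturatedSet_isLindelof_of_mem_image_val {D : Set (LQ X)} :
    ∀ K ∈ Subtype.val '' D, IsSaturatedSet K ∧ IsLindelof K := by
  rintro _ ⟨d, _, rfl⟩
  exact d.2

theorem CntDirected.cntFilteredFam_image_val {D : Set (LQ X)} (hD : CntDirected lqLe D) :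
    CntFilteredFam (Subtype.val '' D) := by
  intro T hT hTc
  obtain ⟨d, hdD, hd⟩ := hD (D ∩ Subtype.val ⁻¹' T) inter_subset_left
    ((hTc.preimage Subtype.val_injective).mono inter_subset_right)
  refine ⟨d.1, mem_image_of_mem _ hdD, ?_⟩
  rintro t ht
  obtain ⟨e, heD, rfl⟩ := hT ht
  exact hd e ⟨heD, ht⟩

theorem CWellFiltered.exists_rIsLUB_val_eq_sInter (hW : CWellFiltered X) {D : Set (LQ X)}
    (hD : CntDirected lqLe D) :
    ∃ m : LQ X, m.1 = ⋂₀ (Subtype.val '' D) ∧ RIsLUB lqLe D m := by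
  have hsat : IsSaturatedSet (⋂₀ (Subtype.val '' D)) :=
    isSaturatedSet_sInter fun A hA => (LQ.isSaturatedSet_isLindelof_of_mem_image_val A hA).1
  have hlin : IsLindelof (⋂₀ (Subtype.val '' D)) :=
    hW.isLindelof_sInter LQ.isSaturatedSet_isLindelof_of_mem_image_val hD.cntFilteredFam_image_val
  refine ⟨⟨_, hsat, hlin⟩, rfl, fun d hd => sInter_subset_of_mem (mem_image_of_mem _ hd), ?_⟩
  rintro b hb x hx _ ⟨d, hd, rfl⟩
  exact hb d hd hx

theorem CWellFiltered.cdComplete (hW : CWellFiltered X) : CDComplete (lqLe (X := X)) :=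
  fun _ hD => (hW.exists_rIsLUB_val_eq_sInter hD).imp fun _ => And.right

def lqNhds (K : LQ X) : Set (LQ X) := {Q | K.1 ⊆ interior Q.1}

theorem cntDirected_lqNhds (hLL : LocallyLindelofSp X) (hP : PSpace X) (K : LQ X) :
    CntDirected lqLe (lqNhds K) := by
  intro E hE hEc
  have hopen : IsOpen (⋂ Q ∈ E, interior Q.1) := by
    rw [← sInter_image]
    exact hP _ (hEc.image _) (forall_mem_image.2 fun _ _ => isOpen_interior)
  obtain ⟨L, hLs, hLl, hKL, hLE⟩ :=
    hLL.exists_saturated_lindelof_between K.2.2 hopen (subset_iInter₂ fun Q hQ => hE hQ)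
  exact ⟨⟨L, hLs, hLl⟩, hKL, fun Q hQ =>
    hLE.trans ((biInter_subset_of_mem hQ).trans interior_subset)⟩

theorem rIsLUB_lqNhds (hLL : LocallyLindelofSp X) (K : LQ X) : RIsLUB lqLe (lqNhds K) K := by
  refine ⟨fun Q hQ => hQ.trans interior_subset, fun b hb x hx => ?_⟩
  refine K.2.1.mem_of_forall_isOpen fun U hU hKU => ?_
  obtain ⟨L, hLs, hLl, hKL, hLU⟩ := hLL.exists_saturated_lindelof_between K.2.2 hU hKU
  exact hLU (hb ⟨L, hLs, hLl⟩ hKL hx)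

theorem CWellFiltered.cWayBelow_of_mem_lqNhds (hW : CWellFiltered X) {Q K : LQ X}
    (hQ : Q ∈ lqNhds K) : CWayBelow lqLe Q K := by
  intro D hD a ha hKa
  obtain ⟨m, hm, hmD⟩ := hW.exists_rIsLUB_val_eq_sInter hD
  have hDQ : ⋂₀ (Subtype.val '' D) ⊆ interior Q.1 := hm ▸ (ha.2 m hmD.1).trans (hKa.trans hQ)
  obtain ⟨_, ⟨d, hd, rfl⟩, hdQ⟩ := hW _ LQ.isSaturatedSet_isLindelof_of_mem_image_val
    hD.cntFilteredFam_image_val _ isOpen_interior hDQ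
  exact ⟨d, hd, hdQ.trans interior_subset⟩

theorem setOf_cWayBelow_eq_lqNhds (hLL : LocallyLindelofSp X) (hW : CWellFiltered X)
    (hP : PSpace X) (K : LQ X) : {Q | CWayBelow lqLe Q K} = lqNhds K := by
  refine Set.ext fun Q => ⟨fun hQ => ?_, hW.cWayBelow_of_mem_lqNhds⟩
  obtain ⟨L, hKL, hLQ⟩ := hQ _ (cntDirected_lqNhds hLL hP K) K (rIsLUB_lqNhds hLL K) subset_rfl
  exact hKL.trans (interior_mono hLQ)

end

/-- if `X` is a locally Lindelöf, c-well-filtered P-space, then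
`(LQ(X), ⊇)` is a countably approximating poset. -/
theorem stmt18 {X : Type u} [TopologicalSpace X] (hLL : LocallyLindelofSp X)
    (hW : CWellFiltered X) (hP : PSpace X) :
    CntApprox (lqLe (X := X)) := by
  refine ⟨hW.cdComplete, fun K => ?_⟩
  rw [setOf_cWayBelow_eq_lqNhds hLL hW hP K]
  exact ⟨cntDirected_lqNhds hLL hP K, rIsLUB_lqNhds hLL K⟩
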